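/- arXiv:1911.06234 — 6 statements merged into one kernel-verified Lean document; each statement's English description precedes it below -/
import Mathlib

section
/- For every λ ≥ 1 and every s ∈ ℝ, C(λs) ≤ λ²·C(s), where C(v) = 2v·arsinh(v/2) − 2√(4 + v²) + 4. -/
/-!
Since `C` is even with `C 0 = 0` and `C' v = 2 arsinh (v / 2)`, it suffices to take `s ≥ 0`,
where `s ↦ λ² C s - C (λ s)` vanishes at `0` and has derivative
`2λ (λ arsinh (s / 2) - arsinh (λ s / 2)) ≥ 0`: `arsinh` is concave on `[0, ∞)` and vanishes at `0`,
so `arsinh (λ x) ≤ λ arsinh x` for `λ ≥ 1`.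
-/

noncomputable def C (v : ℝ) : ℝ :=
  2 * v * Real.arsinh (v / 2) - 2 * Real.sqrt (4 + v ^ 2) + 4

open Real Set

theorem ConcaveOn.map_mul_le_mul_of_one_le {f : ℝ → ℝ} (hf : ConcaveOn ℝ (Ici 0) f)
    (hf0 : 0 ≤ f 0) {lam x : ℝ} (hlam : 1 ≤ lam) (hx : 0 ≤ x) : f (lam * x) ≤ lam * f x := by
  have hlam0 : 0 < lam := by linarith
  have hinv : lam⁻¹ ≤ 1 := inv_le_one_of_one_le₀ hlam
  -- concavity at `x = λ⁻¹ • (λ x) + (1 - λ⁻¹) • 0`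
  have hconc := hf.2 (mem_Ici.2 (by positivity : 0 ≤ lam * x)) (mem_Ici.2 le_rfl)
    (inv_nonneg.2 hlam0.le) (sub_nonneg.2 hinv) (add_sub_cancel _ _)
  simp only [smul_eq_mul, mul_zero, add_zero, inv_mul_cancel_left₀ hlam0.ne'] at hconc
  have hrest : 0 ≤ (1 - lam⁻¹) * f 0 := mul_nonneg (sub_nonneg.2 hinv) hf0
  calc f (lam * x) = lam * (lam⁻¹ * f (lam * x)) := (mul_inv_cancel_left₀ hlam0.ne' _).symm
    _ ≤ lam * f x := by gcongr; linarith

theorem Real.concaveOn_arsinh : ConcaveOn ℝ (Ici 0) arsinh := by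
  have hderiv : deriv arsinh = fun x => (√(1 + x ^ 2))⁻¹ :=
    funext fun x => (hasDerivAt_arsinh x).deriv
  refine AntitoneOn.concaveOn_of_deriv (convex_Ici 0) continuous_arsinh.continuousOn
    differentiable_arsinh.differentiableOn ?_
  rw [hderiv, interior_Ici]
  intro x hx y _ hxy
  have : 0 ≤ x := le_of_lt hx
  dsimp only
  gcongr

theorem Real.arsinh_mul_le {lam x : ℝ} (hlam : 1 ≤ lam) (hx : 0 ≤ x) :
    arsinh (lam * x) ≤ lam * arsinh x :=
  concaveOn_arsinh.map_mul_le_mul_of_one_le arsinh_zero.ge hlam hx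

theorem hasDerivAt_C (v : ℝ) : HasDerivAt C (2 * arsinh (v / 2)) v := by
  have hsqrt : √(1 + (v / 2) ^ 2) = √(4 + v ^ 2) / 2 := by
    rw [show 1 + (v / 2) ^ 2 = (4 + v ^ 2) / 2 ^ 2 by ring, sqrt_div' _ (by positivity),
      sqrt_sq zero_le_two]
  have harsinh := ((hasDerivAt_id' v).div_const 2).arsinh
  have hroot := ((hasDerivAt_pow 2 v).const_add 4).sqrt (by positivity)
  have hC := ((((hasDerivAt_id' v).const_mul 2).mul harsinh).sub (hroot.const_mul 2)).add_const 4
  refine hC.congr_deriv ?_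
  simp only [hsqrt, smul_eq_mul]
  field_simp
  ring

theorem C_zero : C 0 = 0 := by
  norm_num [C, show √4 = 2 by rw [show (4 : ℝ) = 2 ^ 2 by norm_num, sqrt_sq zero_le_two]]

theorem C_abs (v : ℝ) : C |v| = C v := by
  rcases abs_choice v with h | h <;> simp [h, C, arsinh_neg, neg_div]

theorem monotoneOn_sub_C_mul {lam : ℝ} (hlam : 1 ≤ lam) :
    MonotoneOn (fun s => lam ^ 2 * C s - C (lam * s)) (Ici 0) := by
  have hderiv (u : ℝ) : HasDerivAt (fun s => lam ^ 2 * C s - C (lam * s))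
      (2 * lam * (lam * arsinh (u / 2) - arsinh (lam * (u / 2)))) u := by
    refine (((hasDerivAt_C u).const_mul (lam ^ 2)).sub
      ((hasDerivAt_C (lam * u)).comp u ((hasDerivAt_id' u).const_mul lam))).congr_deriv ?_
    rw [mul_div_assoc]
    ring
  refine monotoneOn_of_hasDerivWithinAt_nonneg (convex_Ici 0)
    (fun u _ => (hderiv u).continuousAt.continuousWithinAt)
    (fun u _ => (hderiv u).hasDerivWithinAt) fun u hu => ?_
  rw [interior_Ici, mem_Ioi] at hu
  have := arsinh_mul_le hlam (by positivity : 0 ≤ u / 2)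
  have : 0 ≤ lam * arsinh (u / 2) - arsinh (lam * (u / 2)) := by linarith
  positivity

theorem c_scaling (lam s : ℝ) (hlam : 1 ≤ lam) :
    C (lam * s) ≤ lam ^ 2 * C s := by
  have h := monotoneOn_sub_C_mul hlam self_mem_Ici (abs_nonneg s) (abs_nonneg s)
  simp only [mul_zero, C_zero, sub_zero, sub_nonneg] at h
  rwa [show lam * |s| = |lam * s| by rw [abs_mul, abs_of_pos (by linarith : 0 < lam)],
    C_abs, C_abs] at h
end

section
/- The Legendre–Fenchel transform of C(v) = 2v·arsinh(v/2) − 2√(4 + v²) + 4 equals C*(ζ) = 4·cosh(ζ/2) − 4; that is, for every ζ ∈ ℝ, sup over v ∈ ℝ of (ζv − C(v)) equals 4·cosh(ζ/2) − 4. -/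
lemma cosh_tangent (s t : ℝ) : Real.cosh t + (s - t) * Real.sinh t ≤ Real.cosh s := by
  have h1 := Real.add_one_le_exp (s - t)
  have h2 := Real.add_one_le_exp (t - s)
  have e1 : Real.exp t * (s - t + 1) ≤ Real.exp s := by
    have := mul_le_mul_of_nonneg_left h1 (Real.exp_pos t).le
    rwa [← Real.exp_add, show t + (s - t) = s by ring] at this
  have e2 : Real.exp (-t) * (t - s + 1) ≤ Real.exp (-s) := by
    have := mul_le_mul_of_nonneg_left h2 (Real.exp_pos (-t)).le
    rwa [← Real.exp_add, show -t + (t - s) = -s by ring] at this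
  rw [Real.cosh_eq, Real.cosh_eq, Real.sinh_eq]
  nlinarith [Real.exp_pos t, Real.exp_pos (-t)]

theorem legendre_C (ζ : ℝ) :
    IsLUB (Set.range fun v : ℝ => ζ * v - C v) (4 * Real.cosh (ζ / 2) - 4) := by
  apply IsGreatest.isLUB
  constructor
  · refine ⟨2 * Real.sinh (ζ / 2), ?_⟩
    have hs : Real.arsinh (2 * Real.sinh (ζ / 2) / 2) = ζ / 2 := by
      rw [show 2 * Real.sinh (ζ / 2) / 2 = Real.sinh (ζ / 2) by ring, Real.arsinh_sinh]
    have hsq : 4 + (2 * Real.sinh (ζ / 2)) ^ 2 = (2 * Real.cosh (ζ / 2)) ^ 2 := by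
      nlinarith [Real.cosh_sq (ζ / 2)]
    have hsqrt : Real.sqrt (4 + (2 * Real.sinh (ζ / 2)) ^ 2) = 2 * Real.cosh (ζ / 2) := by
      rw [hsq, Real.sqrt_sq (by positivity)]
    simp only [C, hs, hsqrt]
    ring
  · rintro x ⟨v, rfl⟩
    set t := Real.arsinh (v / 2) with ht
    have hv : Real.sinh t = v / 2 := Real.sinh_arsinh (v / 2)
    have hc : Real.cosh t ^ 2 = (v / 2) ^ 2 + 1 := by rw [Real.cosh_sq, hv]
    have hsq : 4 + v ^ 2 = (2 * Real.cosh t) ^ 2 := by nlinarith [hc]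
    have hsqrt : Real.sqrt (4 + v ^ 2) = 2 * Real.cosh t := by
      rw [hsq, Real.sqrt_sq (by positivity)]
    have key := cosh_tangent (ζ / 2) t
    rw [hv] at key
    simp only [C, hsqrt, ← ht]
    linarith
end

section
/- Let φ, M, w, ŵ = Mw, N = D_w·M^T·D_{ŵ}^{−1}, and P = N·M be as in the coarse-graining setup with w positive. Then P satisfies detailed balance with respect to w: D_w·P^T = P·D_w. -/
open Matrix

theorem P_entry {I J : ℕ} (φ : Fin I → Fin J)
    (M : Matrix (Fin J) (Fin I) ℝ)
    (hM : ∀ j i, M j i = if φ i = j then 1 else 0)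
    (w : Fin I → ℝ)
    (what : Fin J → ℝ)
    (N : Matrix (Fin I) (Fin J) ℝ)
    (hN : N = Matrix.diagonal w * Mᵀ * Matrix.diagonal (fun j => (what j)⁻¹))
    (P : Matrix (Fin I) (Fin I) ℝ) (hP : P = N * M) :
    ∀ i i', P i i' = if φ i' = φ i then w i * (what (φ i))⁻¹ else 0 := by
  intro i i'
  subst hP hN
  simp [Matrix.mul_apply, hM, Matrix.diagonal_apply, Finset.mul_sum, Finset.sum_mul,
    apply_ite, mul_ite, ite_mul]
  have key : ∀ x : Fin I, (if φ x = φ i' then if i = x then w i * (what (φ i'))⁻¹ else 0 else 0)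
      = if i = x then (if φ x = φ i' then w i * (what (φ i'))⁻¹ else 0) else 0 := by
    intro x; by_cases h : i = x <;> simp [h]
  simp only [key, Finset.sum_ite_eq]
  by_cases h : φ i' = φ i
  · simp [h]
  · simp only [Finset.mem_univ, if_true]
    rw [if_neg h, if_neg (fun h' : φ i = φ i' => h h'.symm)]

theorem P_detailed_balance {I J : ℕ} (φ : Fin I → Fin J) (hφ : Function.Surjective φ)
    (M : Matrix (Fin J) (Fin I) ℝ)
    (hM : ∀ j i, M j i = if φ i = j then 1 else 0)
    (w : Fin I → ℝ) (hw : ∀ i, 0 < w i)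
    (what : Fin J → ℝ) (hwhat : what = M.mulVec w)
    (N : Matrix (Fin I) (Fin J) ℝ)
    (hN : N = Matrix.diagonal w * Mᵀ * Matrix.diagonal (fun j => (what j)⁻¹))
    (P : Matrix (Fin I) (Fin I) ℝ) (hP : P = N * M) :
    Matrix.diagonal w * Pᵀ = P * Matrix.diagonal w := by
  have key := P_entry φ M hM w what N hN P hP
  ext i i'
  rw [Matrix.diagonal_mul, Matrix.mul_diagonal, Matrix.transpose_apply, key i' i, key i i']
  by_cases h : φ i = φ i'
  · rw [if_pos h, if_pos h.symm, h]; ring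
  · rw [if_neg h, if_neg (fun h' => h h'.symm), mul_zero, zero_mul]
end

section
/- Let M ∈ ℝ^{J×I}, N ∈ ℝ^{I×J} with M·N = id_{ℝ^J}, A^S, A^F ∈ ℝ^{I×I} with M·A^F = 0 and kernel(A^F) = range(N). If c : [0,T] → ℝ^I is continuously differentiable and satisfies M·ċ(t) = M·A^S·c(t) and A^F·c(t) = 0 for all t, then ĉ(t) := M·c(t) satisfies the coarse-grained ODE dĉ/dt = (M·A^S·N)·ĉ, and conversely c(t) = N·ĉ(t). -/
/-!
Since `M * N = 1`, the matrix `N * M` is a projection fixing `range N = ker A^F`. The fast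
constraint `A^F c(t) = 0` therefore gives the reconstruction `c(t) = N (M c(t))`. Applying `M` to
the slow equation and substituting this reconstruction turns `d(M c)/dt = M A^S c` into the closed
equation `d(M c)/dt = (M A^S N)(M c)`.
-/

open Matrix

theorem HasDerivAt.matrix_mulVec {𝕜 m n : Type*} [NontriviallyNormedField 𝕜] [CompleteSpace 𝕜]
    [Fintype m] [Fintype n] (M : Matrix m n 𝕜) {c : 𝕜 → n → 𝕜} {c' : n → 𝕜} {t : 𝕜}
    (hc : HasDerivAt c c' t) : HasDerivAt (fun s => M *ᵥ c s) (M *ᵥ c') t :=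
  (LinearMap.toContinuousLinearMap M.mulVecLin).hasFDerivAt.comp_hasDerivAt t hc

theorem Matrix.mulVec_mulVec_eq_self_of_mem_range {R m n : Type*} [CommSemiring R]
    [Fintype m] [DecidableEq m] [Fintype n] {M : Matrix m n R} {N : Matrix n m R}
    (hMN : M * N = 1) {x : n → R} (hx : x ∈ LinearMap.range (toLin' N)) :
    N *ᵥ (M *ᵥ x) = x := by
  obtain ⟨y, rfl⟩ := hx
  rw [toLin'_apply, mulVec_mulVec, mulVec_mulVec, Matrix.mul_assoc, hMN, Matrix.mul_one]

theorem coarse_grained_ODE_general {I J : ℕ}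
    (M : Matrix (Fin J) (Fin I) ℝ) (N : Matrix (Fin I) (Fin J) ℝ)
    (hMN : M * N = 1)
    (AS AF : Matrix (Fin I) (Fin I) ℝ)
    (hker : LinearMap.ker (Matrix.toLin' AF) = LinearMap.range (Matrix.toLin' N))
    (T : ℝ)
    (c c' : ℝ → Fin I → ℝ)
    (hderiv : ∀ t ∈ Set.Icc 0 T, HasDerivAt c (c' t) t)
    (hODE : ∀ t ∈ Set.Icc 0 T, M.mulVec (c' t) = M.mulVec (AS.mulVec (c t)))
    (hfast : ∀ t ∈ Set.Icc 0 T, AF.mulVec (c t) = 0) :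
    (∀ t ∈ Set.Icc 0 T,
        HasDerivAt (fun s => M.mulVec (c s))
          ((M * AS * N).mulVec (M.mulVec (c t))) t) ∧
    (∀ t ∈ Set.Icc 0 T, c t = N.mulVec (M.mulVec (c t))) := by
  have hrec : ∀ t ∈ Set.Icc 0 T, c t = N *ᵥ (M *ᵥ c t) := fun t ht => by
    have hmem : c t ∈ LinearMap.ker (toLin' AF) := by
      rw [LinearMap.mem_ker, toLin'_apply, hfast t ht]
    rw [hker] at hmem
    exact (mulVec_mulVec_eq_self_of_mem_range hMN hmem).symm
  refine ⟨fun t ht => ?_, hrec⟩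
  have hslow : M *ᵥ c' t = (M * AS * N) *ᵥ (M *ᵥ c t) :=
    calc M *ᵥ c' t = M *ᵥ (AS *ᵥ (N *ᵥ (M *ᵥ c t))) := by rw [hODE t ht, ← hrec t ht]
      _ = (M * AS * N) *ᵥ (M *ᵥ c t) := by simp only [mulVec_mulVec, Matrix.mul_assoc]
  exact hslow ▸ (hderiv t ht).matrix_mulVec M

theorem coarse_grained_ODE {I J : ℕ}
    (M : Matrix (Fin J) (Fin I) ℝ) (N : Matrix (Fin I) (Fin J) ℝ)
    (hMN : M * N = 1)
    (AS AF : Matrix (Fin I) (Fin I) ℝ)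
    (hMAF : M * AF = 0)
    (hker : LinearMap.ker (Matrix.toLin' AF) = LinearMap.range (Matrix.toLin' N))
    (T : ℝ) (hT : 0 < T)
    (c c' : ℝ → Fin I → ℝ)
    (hderiv : ∀ t ∈ Set.Icc 0 T, HasDerivAt c (c' t) t)
    (hODE : ∀ t ∈ Set.Icc 0 T, M.mulVec (c' t) = M.mulVec (AS.mulVec (c t)))
    (hfast : ∀ t ∈ Set.Icc 0 T, AF.mulVec (c t) = 0) :
    (∀ t ∈ Set.Icc 0 T,
        HasDerivAt (fun s => M.mulVec (c s))
          ((M * AS * N).mulVec (M.mulVec (c t))) t) ∧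
    (∀ t ∈ Set.Icc 0 T, c t = N.mulVec (M.mulVec (c t))) :=
  coarse_grained_ODE_general M N hMN AS AF hker T c c' hderiv hODE hfast
end

section
/- Suppose Φ : (0,∞) → ℝ and Ψ : ℝ → ℝ are C¹, strictly convex, with Ψ(0) = 0, and there exist constants ψ > 0 such that for all ρ_i, ρ_n > 0 one has Ψ'(Φ'(ρ_i) − Φ'(ρ_n)) = ψ·(ρ_i − ρ_n)/√(ρ_i ρ_n). Then there exist γ > 0 and φ₀, φ₁ ∈ ℝ such that Φ(c) = γ·(c·log c − c + 1) + φ₀ + φ₁·c and Ψ(ζ) = γ·ψ·(4·cosh(ζ/(2γ)) − 4). -/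
/-!
The right-hand side of the relation is unchanged under `(ρi, ρn) ↦ (ρi / ρn, 1)`, so injectivity
of `Ψ'` makes `Φ' a - Φ' b` a function of `a / b` alone. Hence `t ↦ Φ' (exp t) - Φ' 1` is additive
and monotone, therefore linear: `Φ' = γ log + Φ' 1` with `γ > 0`. Substituting `ρi = exp (ζ / γ)`,
`ρn = 1` gives `Ψ' ζ = 2 ψ sinh (ζ / (2 γ))`, and integrating both derivatives gives the claim.
-/

open Real Set

theorem AddMonoidHom.apply_real_eq_mul_of_monotone (f : ℝ →+ ℝ) (hf : Monotone f) (x : ℝ) :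
    f x = x * f 1 := by
  have hrat : ∀ q : ℚ, f q = q * f 1 := fun q => by
    simpa using map_ratCast_smul f ℝ ℝ q 1
  have hnonneg : 0 ≤ f 1 := by simpa using hf zero_le_one
  rcases hnonneg.lt_or_eq with hpos | hzero
  · have hdense : DenseRange f := by
      refine Dense.mono ?_ ((mul_left_surjective₀ hpos.ne').denseRange.comp Rat.denseRange_cast
        (continuous_const_mul (f 1)))
      rintro _ ⟨q, rfl⟩
      exact ⟨q, (hrat q).trans (mul_comm _ _)⟩
    simpa using map_real_smul f (hf.continuous_of_denseRange hdense) x 1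
  · obtain ⟨p, hp⟩ := exists_rat_lt x
    obtain ⟨q, hq⟩ := exists_rat_gt x
    have hlow := hf hp.le
    have hupp := hf hq.le
    rw [hrat, ← hzero, mul_zero] at hlow hupp
    rw [← hzero, mul_zero]
    exact le_antisymm hupp hlow

theorem StrictMonoOn.exists_eq_mul_log_add {f : ℝ → ℝ} (hf : StrictMonoOn f (Ioi 0))
    (hquot : ∀ a > 0, ∀ b > 0, f a - f b = f (a / b) - f 1) :
    ∃ γ > 0, ∀ c > 0, f c = γ * log c + f 1 := by
  let G : ℝ →+ ℝ := AddMonoidHom.mk' (fun t => f (exp t) - f 1) fun s t => by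
    have := hquot (exp (s + t)) (exp_pos _) (exp t) (exp_pos _)
    rw [← exp_sub, add_sub_cancel_right] at this
    linarith
  have hG : StrictMono G := fun s t hst => by
    simpa [G] using hf (exp_pos s) (exp_pos t) (exp_lt_exp.mpr hst)
  refine ⟨G 1, by simpa using hG zero_lt_one, fun c hc => ?_⟩
  have := G.apply_real_eq_mul_of_monotone hG.monotone (log c)
  simp only [G, AddMonoidHom.mk'_apply, exp_log hc] at this ⊢
  linarith

theorem sub_div_sqrt_mul_eq_div_sub_one_div_sqrt {a b : ℝ} (ha : 0 < a) (hb : 0 < b) :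
    (a - b) / √(a * b) = (a / b - 1) / √(a / b) := by
  rw [sqrt_mul ha.le, sqrt_div ha.le]
  have := sqrt_pos.mpr hb
  field_simp
  rw [sq_sqrt hb.le]
  ring

theorem exp_sub_one_div_sqrt_exp (s : ℝ) : (exp s - 1) / √(exp s) = 2 * sinh (s / 2) := by
  rw [← exp_half, sinh_eq, exp_neg]
  field_simp
  rw [sq, ← exp_add, add_halves]

theorem hasDerivAt_mul_log_sub_add_one {c : ℝ} (hc : c ≠ 0) :
    HasDerivAt (fun x => x * log x - x + 1) (log c) c := by
  simpa using ((hasDerivAt_mul_log hc).sub (hasDerivAt_id c)).add_const 1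

theorem hasDerivAt_cosh_div_sub {a : ℝ} (ha : a ≠ 0) (ζ : ℝ) :
    HasDerivAt (fun x => 4 * cosh (x / (2 * a)) - 4) (2 * sinh (ζ / (2 * a)) / a) ζ := by
  refine ((((hasDerivAt_id' ζ).div_const (2 * a)).cosh.const_mul 4).sub_const 4).congr_deriv ?_
  field_simp
  ring

theorem eq_mul_log_of_deriv_eq {Φ : ℝ → ℝ} {γ φ₁ : ℝ}
    (hdiff : ∀ c ∈ Ioi (0 : ℝ), DifferentiableAt ℝ Φ c)
    (hderiv : ∀ c > 0, deriv Φ c = γ * log c + φ₁) :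
    ∀ c > 0, Φ c = γ * (c * log c - c + 1) + (Φ 1 - φ₁) + φ₁ * c := by
  have hg : ∀ c > (0 : ℝ), HasDerivAt (fun x => γ * (x * log x - x + 1) + (Φ 1 - φ₁) + φ₁ * x)
      (γ * log c + φ₁) c := fun c hc => by
    simpa using (((hasDerivAt_mul_log_sub_add_one hc.ne').const_mul γ).add_const _).fun_add
      ((hasDerivAt_id' c).const_mul φ₁)
  intro c hc
  refine isOpen_Ioi.eqOn_of_deriv_eq isPreconnected_Ioi
    (fun x hx => (hdiff x hx).differentiableWithinAt)
    (fun x hx => (hg x hx).differentiableAt.differentiableWithinAt)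
    (fun x hx => ?_) (mem_Ioi.mpr one_pos) (by simp) hc
  rw [hderiv x hx, (hg x hx).deriv]

theorem eq_mul_cosh_of_deriv_eq {Ψ : ℝ → ℝ} {γ ψ : ℝ} (hγ : γ ≠ 0) (hdiff : Differentiable ℝ Ψ)
    (h0 : Ψ 0 = 0) (hderiv : ∀ ζ, deriv Ψ ζ = 2 * ψ * sinh (ζ / (2 * γ))) :
    ∀ ζ, Ψ ζ = γ * ψ * (4 * cosh (ζ / (2 * γ)) - 4) := by
  have hg : ∀ ζ, HasDerivAt (fun x => γ * ψ * (4 * cosh (x / (2 * γ)) - 4))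
      (2 * ψ * sinh (ζ / (2 * γ))) ζ := fun ζ => by
    refine ((hasDerivAt_cosh_div_sub hγ ζ).const_mul (γ * ψ)).congr_deriv ?_
    field_simp
  intro ζ
  refine isOpen_univ.eqOn_of_deriv_eq isPreconnected_univ hdiff.differentiableOn
    (fun x _ => (hg x).differentiableAt.differentiableWithinAt) (fun x _ => ?_) (mem_univ 0)
    (by simp [h0]) (mem_univ ζ)
  rw [hderiv x, (hg x).deriv]

theorem tilt_invariant_characterization_general
    (Φ Ψ : ℝ → ℝ) (ψ : ℝ)
    (hΦdiff : ∀ c ∈ Set.Ioi (0 : ℝ), DifferentiableAt ℝ Φ c)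
    (hΦconv : StrictConvexOn ℝ (Set.Ioi 0) Φ)
    (hΨdiff : Differentiable ℝ Ψ)
    (hΨconv : StrictConvexOn ℝ Set.univ Ψ)
    (hΨ0 : Ψ 0 = 0)
    (heq : ∀ ρi ρn : ℝ, 0 < ρi → 0 < ρn →
      deriv Ψ (deriv Φ ρi - deriv Φ ρn) = ψ * (ρi - ρn) / Real.sqrt (ρi * ρn)) :
    ∃ γ > (0 : ℝ), ∃ φ0 φ1 : ℝ,
      (∀ c > (0 : ℝ), Φ c = γ * (c * Real.log c - c + 1) + φ0 + φ1 * c) ∧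
      (∀ ζ : ℝ, Ψ ζ = γ * ψ * (4 * Real.cosh (ζ / (2 * γ)) - 4)) := by
  have hΦ' : StrictMonoOn (deriv Φ) (Ioi 0) := hΦconv.strictMonoOn_deriv hΦdiff
  have hΨ' : Function.Injective (deriv Ψ) :=
    injOn_univ.mp (hΨconv.strictMonoOn_deriv fun x _ => hΨdiff x).injOn
  obtain ⟨γ, hγ, hlog⟩ := hΦ'.exists_eq_mul_log_add fun a ha b hb => hΨ' <| by
    rw [heq a b ha hb, heq _ _ (div_pos ha hb) one_pos, mul_one, mul_div_assoc, mul_div_assoc,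
      sub_div_sqrt_mul_eq_div_sub_one_div_sqrt ha hb]
  have hsinh : ∀ ζ, deriv Ψ ζ = 2 * ψ * sinh (ζ / (2 * γ)) := fun ζ => by
    have := heq (exp (ζ / γ)) 1 (exp_pos _) one_pos
    rw [hlog _ (exp_pos _), log_exp, mul_div_cancel₀ _ hγ.ne', add_sub_cancel_right, mul_one,
      mul_div_assoc, exp_sub_one_div_sqrt_exp] at this
    rw [this, div_div, mul_comm γ 2]
    ring
  exact ⟨γ, hγ, _, _, eq_mul_log_of_deriv_eq hΦdiff hlog,
    eq_mul_cosh_of_deriv_eq hγ.ne' hΨdiff hΨ0 hsinh⟩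

theorem tilt_invariant_characterization
    (Φ Ψ : ℝ → ℝ) (ψ : ℝ) (hψ : 0 < ψ)
    (hΦdiff : ∀ c ∈ Set.Ioi (0 : ℝ), DifferentiableAt ℝ Φ c)
    (hΦconv : StrictConvexOn ℝ (Set.Ioi 0) Φ)
    (hΨdiff : Differentiable ℝ Ψ)
    (hΨconv : StrictConvexOn ℝ Set.univ Ψ)
    (hΨ0 : Ψ 0 = 0)
    (heq : ∀ ρi ρn : ℝ, 0 < ρi → 0 < ρn →
      deriv Ψ (deriv Φ ρi - deriv Φ ρn) = ψ * (ρi - ρn) / Real.sqrt (ρi * ρn)) :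
    ∃ γ > (0 : ℝ), ∃ φ0 φ1 : ℝ,
      (∀ c > (0 : ℝ), Φ c = γ * (c * Real.log c - c + 1) + φ0 + φ1 * c) ∧
      (∀ ζ : ℝ, Ψ ζ = γ * ψ * (4 * Real.cosh (ζ / (2 * γ)) - 4)) :=
  tilt_invariant_characterization_general Φ Ψ ψ hΦdiff hΦconv hΨdiff hΨconv hΨ0 heq
end

section
/- Let Q ⊂ ℝ^I be the probability simplex and w^ε, w⁰ ∈ Q with all entries of w⁰ positive and w^ε → w⁰ as ε → 0. Then the relative Boltzmann entropies E_ε(c) = Σ_i w^ε_i·λ_Bz(c_i/w^ε_i), with λ_Bz(ρ) = ρ log ρ − ρ + 1 (extended by λ_Bz(0) = 1), converge uniformly on Q to E₀(c) = Σ_i w⁰_i·λ_Bz(c_i/w⁰_i). -/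
lemma entropy_key (lb : ℝ → ℝ) (hlb : ∀ ρ, lb ρ = ρ * Real.log ρ - ρ + 1)
    (v c : ℝ) (hv : 0 < v) :
    v * lb (c / v) = c * Real.log c - c * Real.log v - c + v := by
  rw [hlb]
  by_cases hc : c = 0
  · simp [hc]
  · rw [Real.log_div hc (ne_of_gt hv)]
    field_simp

theorem entropy_uniform_convergence {I : ℕ}
    (Q : Set (Fin I → ℝ))
    (hQ : Q = {c | (∀ i, 0 ≤ c i ∧ c i ≤ 1) ∧ ∑ i, c i = 1})
    (lb : ℝ → ℝ) (hlb : ∀ ρ, lb ρ = ρ * Real.log ρ - ρ + 1)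
    (w : ℝ → Fin I → ℝ) (w0 : Fin I → ℝ)
    (hw0pos : ∀ i, 0 < w0 i) (hw0Q : w0 ∈ Q)
    (hwQ : ∀ ε > (0 : ℝ), w ε ∈ Q ∧ ∀ i, 0 < w ε i)
    (hconv : Filter.Tendsto w (nhdsWithin 0 (Set.Ioi 0)) (nhds w0)) :
    TendstoUniformlyOn (fun ε c => ∑ i, w ε i * lb (c i / w ε i))
      (fun c => ∑ i, w0 i * lb (c i / w0 i)) (nhdsWithin 0 (Set.Ioi 0)) Q := by
  rw [Metric.tendstoUniformlyOn_iff]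
  intro δ hδ
  have hwi : ∀ i, Filter.Tendsto (fun ε => w ε i) (nhdsWithin 0 (Set.Ioi 0)) (nhds (w0 i)) :=
    fun i => ((continuous_apply i).continuousAt.tendsto).comp hconv
  have hlog : ∀ i, Filter.Tendsto (fun ε => Real.log (w ε i)) (nhdsWithin 0 (Set.Ioi 0))
      (nhds (Real.log (w0 i))) :=
    fun i => ((Real.continuousAt_log (ne_of_gt (hw0pos i))).tendsto).comp (hwi i)
  have hg : Filter.Tendsto
      (fun ε => ∑ i, (|Real.log (w ε i) - Real.log (w0 i)| + |w ε i - w0 i|))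
      (nhdsWithin 0 (Set.Ioi 0)) (nhds 0) := by
    have := tendsto_finset_sum Finset.univ fun (i : Fin I) _ =>
      (((hlog i).sub_const (Real.log (w0 i))).abs.add ((hwi i).sub_const (w0 i)).abs)
    simpa using this
  have hsmall : ∀ᶠ ε in nhdsWithin 0 (Set.Ioi 0),
      (∑ i, (|Real.log (w ε i) - Real.log (w0 i)| + |w ε i - w0 i|)) < δ :=
    hg.eventually_lt_const hδ
  filter_upwards [hsmall, self_mem_nhdsWithin] with ε hε hεpos c hc
  have hwε := (hwQ ε hεpos).2
  rw [Real.dist_eq]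
  have hcmem : (∀ i, 0 ≤ c i ∧ c i ≤ 1) ∧ ∑ i, c i = 1 := by rwa [hQ] at hc
  have hdiff : (∑ i, w0 i * lb (c i / w0 i)) - (∑ i, w ε i * lb (c i / w ε i))
      = ∑ i, (c i * (Real.log (w ε i) - Real.log (w0 i)) + (w0 i - w ε i)) := by
    rw [← Finset.sum_sub_distrib]
    refine Finset.sum_congr rfl fun i _ => ?_
    rw [entropy_key lb hlb _ _ (hw0pos i), entropy_key lb hlb _ _ (hwε i)]
    ring
  rw [hdiff]
  calc |∑ i, (c i * (Real.log (w ε i) - Real.log (w0 i)) + (w0 i - w ε i))|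
      ≤ ∑ i, |c i * (Real.log (w ε i) - Real.log (w0 i)) + (w0 i - w ε i)| :=
        Finset.abs_sum_le_sum_abs _ _
    _ ≤ ∑ i, (|Real.log (w ε i) - Real.log (w0 i)| + |w ε i - w0 i|) := by
        refine Finset.sum_le_sum fun i _ => ?_
        refine (abs_add_le _ _).trans (add_le_add ?_ (le_of_eq (abs_sub_comm _ _)))
        rw [abs_mul]
        calc |c i| * |Real.log (w ε i) - Real.log (w0 i)|
            ≤ 1 * |Real.log (w ε i) - Real.log (w0 i)| := by
              apply mul_le_mul_of_nonneg_right _ (abs_nonneg _)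
              rw [abs_of_nonneg (hcmem.1 i).1]; exact (hcmem.1 i).2
          _ = _ := one_mul _
    _ < δ := hε
end
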